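/- The family of (s⁰)-sets forms a σ-ideal on 2^ω: it is closed under subsets and countable unions, and contains the empty set. -/

import Mathlib

open Set

/-- A perfect (Sacks) tree: nonempty, downward closed, and every node has a splitting extension. -/
def IsPerfectTree (T : Set (List Bool)) : Prop :=
  T.Nonempty ∧ (∀ t ∈ T, ∀ n, t.take n ∈ T) ∧
    ∀ t ∈ T, ∃ s ∈ T, t <+: s ∧ s ++ [false] ∈ T ∧ s ++ [true] ∈ T

/-- The set of infinite branches of a tree. -/
def branches (T : Set (List Bool)) : Set (ℕ → Bool) :=
  {x | ∀ n, (List.ofFn fun i : Fin n => x i) ∈ T}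

/-- `A` is an (s)-set. -/
def MarczewskiS (A : Set (ℕ → Bool)) : Prop :=
  ∀ T, IsPerfectTree T → ∃ Q, IsPerfectTree Q ∧ Q ⊆ T ∧
    (branches Q ⊆ A ∨ branches Q ∩ A = ∅)

/-- `A` is an (s⁰)-set. -/
def S0Set (A : Set (ℕ → Bool)) : Prop :=
  ∀ T, IsPerfectTree T → ∃ Q, IsPerfectTree Q ∧ Q ⊆ T ∧ branches Q ∩ A = ∅

/-!
A fusion argument. Starting from `T₀`, build a system of perfect subtrees `T_σ` indexed by
finite binary strings, each with a splitting node `s_σ`: the tree `T_{b σ}` is obtained by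
restricting `T_σ` to the nodes comparable with `s_σ ++ [b]` and then shrinking it so that its
branches avoid `S (|σ| + 1)`. The tree generated by all the nodes `s_σ` is perfect, lies in
`T₀`, and at each level `n` it is covered by the finitely many trees `T_σ` with `|σ| = n`,
so each of its branches is a branch of one of them and avoids `S n`.
-/

lemma List.take_ofFn_apply {α : Type*} (x : ℕ → α) {n m : ℕ} (h : n ≤ m) :
    (List.ofFn fun i : Fin m => x i).take n = List.ofFn fun i : Fin n => x i := by
  apply List.ext_getElem
  · simp [h]
  · intro i _ _
    simp [List.getElem_take]

lemma mem_of_prefix_of_take_mem {α : Type*} {T : Set (List α)}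
    (hT : ∀ t ∈ T, ∀ n, t.take n ∈ T) {s t : List α} (hst : s <+: t) (ht : t ∈ T) : s ∈ T := by
  rw [List.prefix_iff_eq_take.1 hst]
  exact hT t ht _

lemma branches_mono {T T' : Set (List Bool)} (h : T ⊆ T') : branches T ⊆ branches T' :=
  fun _ hx n => h (hx n)

lemma branches_iUnion_subset {ι : Type*} [Finite ι] {T : ι → Set (List Bool)}
    (hT : ∀ i, ∀ t ∈ T i, ∀ n, t.take n ∈ T i) :
    branches (⋃ i, T i) ⊆ ⋃ i, branches (T i) := by
  intro x hx
  -- Prefix-closed trees are left for good, so finitely many of them are all left eventually.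
  by_contra hx'
  simp only [mem_iUnion, not_exists] at hx'
  have hleave : ∀ᶠ k in Filter.atTop, ∀ i, (List.ofFn fun j : Fin k => x j) ∉ T i := by
    refine Filter.eventually_all.2 fun i => ?_
    obtain ⟨m, hm⟩ : ∃ m, (List.ofFn fun j : Fin m => x j) ∉ T i := by
      simpa [branches] using hx' i
    refine Filter.eventually_atTop.2 ⟨m, fun k hmk hk => hm ?_⟩
    rw [← List.take_ofFn_apply x hmk]
    exact hT i _ hk m
  obtain ⟨k, hk⟩ := hleave.exists
  obtain ⟨i, hi⟩ := mem_iUnion.1 (hx k)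
  exact hk i hi

namespace IsPerfectTree

variable {T : Set (List Bool)}

lemma exists_length_ge (hT : IsPerfectTree T) (N : ℕ) : ∃ t ∈ T, N ≤ t.length := by
  induction N with
  | zero =>
    obtain ⟨t, ht⟩ := hT.1
    exact ⟨t, ht, Nat.zero_le _⟩
  | succ N ih =>
    obtain ⟨t, ht, hN⟩ := ih
    obtain ⟨s, -, hts, hs, -⟩ := hT.2.2 t ht
    exact ⟨s ++ [false], hs, by simpa using hN.trans hts.length_le⟩

lemma sep_comparable (hT : IsPerfectTree T) {u : List Bool} (hu : u ∈ T) :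
    IsPerfectTree {t ∈ T | t <+: u ∨ u <+: t} := by
  refine ⟨⟨u, hu, Or.inr List.prefix_rfl⟩, ?_, ?_⟩
  · rintro t ⟨ht, hc⟩ n
    refine ⟨hT.2.1 t ht n, ?_⟩
    rcases hc with hc | hc
    · exact Or.inl ((List.take_prefix n t).trans hc)
    · rcases le_total u.length n with hn | hn
      · exact Or.inr (List.prefix_take_iff.2 ⟨hc, hn⟩)
      · refine Or.inl (List.prefix_of_prefix_length_le (List.take_prefix n t) hc ?_)
        simpa using Or.inl hn
  · rintro t ⟨ht, hc⟩
    obtain ⟨w, hw, htw, huw⟩ : ∃ w ∈ T, t <+: w ∧ u <+: w :=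
      hc.elim (fun h => ⟨u, hu, h, List.prefix_rfl⟩) (fun h => ⟨t, ht, List.prefix_rfl, h⟩)
    obtain ⟨s, hs, hws, hs0, hs1⟩ := hT.2.2 w hw
    have hus : u <+: s := huw.trans hws
    exact ⟨s, ⟨hs, Or.inr hus⟩, htw.trans hws,
      ⟨hs0, Or.inr (hus.trans (List.prefix_append _ _))⟩,
      ⟨hs1, Or.inr (hus.trans (List.prefix_append _ _))⟩⟩

lemma exists_splitting_extension (hT : IsPerfectTree T) {u : List Bool}
    (hTu : ∀ t ∈ T, t <+: u ∨ u <+: t) : ∃ s, u <+: s ∧ ∀ b : Bool, s ++ [b] ∈ T := by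
  obtain ⟨t, ht, hlen⟩ := hT.exists_length_ge u.length
  obtain ⟨s, hs, hts, hs0, hs1⟩ := hT.2.2 t ht
  refine ⟨s, ?_, Bool.forall_bool.2 ⟨hs0, hs1⟩⟩
  rcases hTu s hs with h | h
  · exact List.prefix_of_prefix_length_le List.prefix_rfl h (hlen.trans hts.length_le)
  · exact h

end IsPerfectTree

lemma s0Set_empty : S0Set ∅ :=
  fun T hT => ⟨T, hT, subset_rfl, inter_empty _⟩

lemma S0Set.subset {A B : Set (ℕ → Bool)} (hB : S0Set B) (hAB : A ⊆ B) : S0Set A := by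
  intro T hT
  obtain ⟨Q, hQ, hQT, hdisj⟩ := hB T hT
  exact ⟨Q, hQ, hQT, subset_empty_iff.1 (hdisj ▸ inter_subset_inter_right _ hAB)⟩

lemma S0Set.exists_refinement {A : Set (ℕ → Bool)} (hA : S0Set A) {T : Set (List Bool)}
    (hT : IsPerfectTree T) {u : List Bool} (hu : u ∈ T) :
    ∃ T', IsPerfectTree T' ∧ T' ⊆ T ∧ branches T' ∩ A = ∅ ∧
      ∃ s, u <+: s ∧ ∀ b : Bool, s ++ [b] ∈ T' := by
  obtain ⟨T', hT', hsub, hdisj⟩ := hA _ (hT.sep_comparable hu)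
  exact ⟨T', hT', hsub.trans (sep_subset _ _), hdisj,
    hT'.exists_splitting_extension fun t ht => (hsub ht).2⟩

/-- Addresses are read with the latest choice first: `b :: σ` is the child of `σ` in
direction `b`. -/
structure FusionScheme where
  tree : List Bool → Set (List Bool)
  node : List Bool → List Bool
  take_mem : ∀ σ, ∀ t ∈ tree σ, ∀ n, t.take n ∈ tree σ
  node_mem : ∀ σ, node σ ∈ tree σ
  tree_cons_subset : ∀ b σ, tree (b :: σ) ⊆ tree σ
  prefix_node_cons : ∀ b σ, node σ ++ [b] <+: node (b :: σ)

namespace FusionScheme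

variable (F : FusionScheme)

def fusion : Set (List Bool) := {t | ∃ σ, t <+: F.node σ}

variable {F}

lemma tree_subset_of_suffix {σ τ : List Bool} (h : σ <:+ τ) : F.tree τ ⊆ F.tree σ := by
  induction τ with
  | nil => rw [List.suffix_nil.1 h]
  | cons b τ ih =>
    rcases List.suffix_cons_iff.1 h with rfl | h
    · exact subset_rfl
    · exact (F.tree_cons_subset b τ).trans (ih h)

lemma node_prefix_of_suffix {σ τ : List Bool} (h : σ <:+ τ) : F.node σ <+: F.node τ := by
  induction τ with
  | nil => rw [List.suffix_nil.1 h]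
  | cons b τ ih =>
    rcases List.suffix_cons_iff.1 h with rfl | h
    · exact List.prefix_rfl
    · exact (ih h).trans ((List.prefix_append _ _).trans (F.prefix_node_cons b τ))

lemma exists_node_mem_tree (σ : List Bool) (n : ℕ) :
    ∃ τ : List.Vector Bool n, F.node σ ∈ F.tree τ.toList := by
  rcases le_total n σ.length with h | h
  · exact ⟨⟨σ.drop (σ.length - n), by simp only [List.length_drop]; omega⟩,
      tree_subset_of_suffix (List.drop_suffix _ _) (F.node_mem σ)⟩
  · exact ⟨⟨List.replicate (n - σ.length) false ++ σ,
        by simp only [List.length_append, List.length_replicate]; omega⟩,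
      mem_of_prefix_of_take_mem (F.take_mem _) (node_prefix_of_suffix (List.suffix_append _ σ))
        (F.node_mem _)⟩

lemma fusion_subset_iUnion_tree (n : ℕ) :
    F.fusion ⊆ ⋃ τ : List.Vector Bool n, F.tree τ.toList := by
  rintro t ⟨σ, hσ⟩
  obtain ⟨τ, hτ⟩ := F.exists_node_mem_tree σ n
  exact mem_iUnion.2 ⟨τ, mem_of_prefix_of_take_mem (F.take_mem _) hσ hτ⟩

lemma fusion_subset_tree_nil : F.fusion ⊆ F.tree [] := by
  rintro t ⟨σ, hσ⟩
  exact mem_of_prefix_of_take_mem (F.take_mem _) hσ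
    (tree_subset_of_suffix List.nil_suffix (F.node_mem σ))

lemma isPerfectTree_fusion : IsPerfectTree F.fusion :=
  ⟨⟨F.node [], [], List.prefix_rfl⟩,
    fun t ⟨σ, hσ⟩ n => ⟨σ, (List.take_prefix n t).trans hσ⟩,
    fun _ ⟨σ, hσ⟩ => ⟨F.node σ, ⟨σ, List.prefix_rfl⟩, hσ,
      ⟨false :: σ, F.prefix_node_cons false σ⟩, ⟨true :: σ, F.prefix_node_cons true σ⟩⟩⟩

lemma branches_fusion_subset (n : ℕ) :
    branches F.fusion ⊆ ⋃ τ : List.Vector Bool n, branches (F.tree τ.toList) :=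
  (branches_mono (F.fusion_subset_iUnion_tree n)).trans
    (branches_iUnion_subset fun τ => F.take_mem τ.toList)

end FusionScheme

lemma exists_fusionScheme {S : ℕ → Set (ℕ → Bool)} (hS : ∀ n, S0Set (S n))
    {T₀ : Set (List Bool)} (hT₀ : IsPerfectTree T₀) :
    ∃ F : FusionScheme, F.tree [] ⊆ T₀ ∧ ∀ σ, branches (F.tree σ) ∩ S σ.length = ∅ := by
  let State :=
    {p : Set (List Bool) × List Bool // IsPerfectTree p.1 ∧ ∀ b : Bool, p.2 ++ [b] ∈ p.1}
  obtain ⟨root, hroot_sub, hroot_disj⟩ :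
      ∃ p : State, p.1.1 ⊆ T₀ ∧ branches p.1.1 ∩ S 0 = ∅ := by
    obtain ⟨T, hT, hTT₀, hdisj⟩ := hS 0 T₀ hT₀
    obtain ⟨t, ht⟩ := hT.1
    obtain ⟨s, -, -, hs⟩ := hT.2.2 t ht
    exact ⟨⟨(T, s), hT, Bool.forall_bool.2 hs⟩, hTT₀, hdisj⟩
  have step : ∀ (n : ℕ) (b : Bool) (p : State), ∃ q : State,
      q.1.1 ⊆ p.1.1 ∧ branches q.1.1 ∩ S (n + 1) = ∅ ∧ p.1.2 ++ [b] <+: q.1.2 := by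
    rintro n b ⟨⟨T, s⟩, hT, hs⟩
    obtain ⟨T', hT', hT'T, hdisj, s', hss', hs'⟩ := (hS (n + 1)).exists_refinement hT (hs b)
    exact ⟨⟨(T', s'), hT', hs'⟩, hT'T, hdisj, hss'⟩
  choose child child_subset child_disjoint child_prefix using step
  let F : List Bool → State := fun σ => σ.rec root fun b σ p => child σ.length b p
  refine ⟨⟨fun σ => (F σ).1.1, fun σ => (F σ).1.2, fun σ => (F σ).2.1.2.1,
    fun σ => mem_of_prefix_of_take_mem (F σ).2.1.2.1 (List.prefix_append _ [false])
      ((F σ).2.2 false),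
    fun b σ => child_subset _ b (F σ), fun b σ => child_prefix _ b (F σ)⟩, hroot_sub, ?_⟩
  rintro (_ | ⟨b, σ⟩)
  · exact hroot_disj
  · exact child_disjoint _ b (F σ)

theorem s0Set_iUnion {S : ℕ → Set (ℕ → Bool)} (hS : ∀ n, S0Set (S n)) :
    S0Set (⋃ n, S n) := by
  intro T hT
  obtain ⟨F, hroot, hdisj⟩ := exists_fusionScheme hS hT
  refine ⟨F.fusion, F.isPerfectTree_fusion, F.fusion_subset_tree_nil.trans hroot, ?_⟩
  refine eq_empty_of_forall_notMem fun x ⟨hxQ, hxS⟩ => ?_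
  obtain ⟨n, hxn⟩ := mem_iUnion.1 hxS
  obtain ⟨τ, hxτ⟩ := mem_iUnion.1 (F.branches_fusion_subset n hxQ)
  have hτ := hdisj τ.toList
  rw [τ.toList_length] at hτ
  exact hτ.subset ⟨hxτ, hxn⟩

/-- The (s⁰)-sets form a σ-ideal on `2^ω`. -/
theorem s0_sigma_ideal :
    S0Set (∅ : Set (ℕ → Bool)) ∧
    (∀ A B : Set (ℕ → Bool), A ⊆ B → S0Set B → S0Set A) ∧
    (∀ S : ℕ → Set (ℕ → Bool), (∀ n, S0Set (S n)) → S0Set (⋃ n, S n)) :=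
  ⟨s0Set_empty, fun _ _ hAB hB => hB.subset hAB, fun _ => s0Set_iUnion⟩
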